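/- Assume β ∈ [0,1] and M > 6. There exists a constant c > 0 (depending only on β and M) such that for all ω₁ > 1 one has C₂₁²³⁴[n⁰¹, n⁰¹, n⁰¹](ω₁) ≥ c · ω₁^{2β − 1/2 − M/2}. -/
import Mathlib


open MeasureTheory Real

noncomputable section

/-- Japanese bracket ⟨ω⟩ = (1 + ω²)^{1/2}. -/
def jb (ω : ℝ) : ℝ := Real.sqrt (1 + ω ^ 2)

/-- n⁰¹(ω) = ⟨ω⟩^{-M/2}. -/
def n01 (M : ℝ) (ω : ℝ) : ℝ := jb ω ^ (-(M / 2))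

/-- The operator C₂₁²³⁴, with ω₂ = ω₃ + ω₄ − ω₁. -/
def C21op (β : ℝ) (k l m : ℝ → ℝ) (ω₁ : ℝ) : ℝ :=
  64 * π ^ 3 * ω₁ ^ (β - 1/2) *
    ∫ ω₃ in (0:ℝ)..(ω₁ / 2), ∫ ω₄ in (ω₁ - ω₃)..ω₁,
      (ω₃ + ω₄ - ω₁) ^ (β + 1/2) * ω₃ ^ β * ω₄ ^ β *
        (k (ω₃ + ω₄ - ω₁) * l ω₃ * m ω₄)

/-- The operator C₂₂²³⁴, with ω₂ = ω₃ + ω₄ − ω₁. -/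
def C22op (β : ℝ) (k l m : ℝ → ℝ) (ω₁ : ℝ) : ℝ :=
  64 * π ^ 3 * ω₁ ^ (β - 1/2) *
    ∫ ω₃ in (ω₁ / 2)..ω₁, ∫ ω₄ in ω₃..ω₁,
      (ω₃ + ω₄ - ω₁) ^ (β + 1/2) * ω₃ ^ β * ω₄ ^ β *
        (k (ω₃ + ω₄ - ω₁) * l ω₃ * m ω₄)

/-- The operator C₃²³⁴, with ω₂ = ω₃ + ω₄ − ω₁. -/
def C3op (β : ℝ) (k l m : ℝ → ℝ) (ω₁ : ℝ) : ℝ :=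
  64 * π ^ 3 * ω₁ ^ (β - 1/2) *
    ∫ ω₃ in (0:ℝ)..ω₁, ∫ ω₄ in Set.Ioi ω₁,
      (ω₃ + ω₄ - ω₁) ^ β * ω₃ ^ (β + 1/2) * ω₄ ^ β *
        (k (ω₃ + ω₄ - ω₁) * l ω₃ * m ω₄)

/-- The operator C₁²³⁴, with ω₂ = ω₃ + ω₄ − ω₁. -/
def C1op (β : ℝ) (k l m : ℝ → ℝ) (ω₁ : ℝ) : ℝ :=
  64 * π ^ 3 * ω₁ ^ β *
    ∫ ω₃ in Set.Ioi ω₁, ∫ ω₄ in Set.Ioi ω₃,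
      (ω₃ + ω₄ - ω₁) ^ β * ω₃ ^ β * ω₄ ^ β *
        (k (ω₃ + ω₄ - ω₁) * l ω₃ * m ω₄)

/-- The full domain of integration {0 ≤ ω₃ ≤ ω₄, ω₃ + ω₄ ≥ ω₁} ⊂ ℝ². -/
def Dom (ω₁ : ℝ) : Set (ℝ × ℝ) := {p | 0 ≤ p.1 ∧ p.1 ≤ p.2 ∧ ω₁ ≤ p.1 + p.2}

/-- The cross-section factor min{√ω₁, √ω₂, √ω₃}, with ω₂ = ω₃ + ω₄ − ω₁,
where p = (ω₃, ω₄). -/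
def crossMin (ω₁ : ℝ) (p : ℝ × ℝ) : ℝ :=
  min (Real.sqrt ω₁) (min (Real.sqrt (p.1 + p.2 - ω₁)) (Real.sqrt p.1))

/-- The operator C^{j₁j₂j₃}[k,l,m](ω₁) where the factor is k(ω_{j₁}) l(ω_{j₂}) m(ω_{j₃}),
with ω₂ = ω₃ + ω₄ − ω₁ and p = (ω₃, ω₄); here the selection of frequencies is passed
as a function `sel : (ℝ × ℝ) → ℝ × ℝ × ℝ` giving (ω_{j₁}, ω_{j₂}, ω_{j₃}). -/
def Cfull (β : ℝ) (k l m : ℝ → ℝ) (sel : ℝ → ℝ × ℝ → ℝ × ℝ × ℝ) (ω₁ : ℝ) : ℝ :=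
  64 * π ^ 3 * ω₁ ^ (β - 1/2) *
    ∫ p in Dom ω₁,
      ((p.1 + p.2 - ω₁) * p.1 * p.2) ^ β * crossMin ω₁ p *
        (k (sel ω₁ p).1 * l (sel ω₁ p).2.1 * m (sel ω₁ p).2.2)

/-- C²³⁴[k,l,m](ω₁): integrand k(ω₂) l(ω₃) m(ω₄). -/
def C234 (β : ℝ) (k l m : ℝ → ℝ) : ℝ → ℝ :=
  Cfull β k l m (fun ω₁ p => (p.1 + p.2 - ω₁, p.1, p.2))

/-- C¹²⁴[k,l,m](ω₁): integrand k(ω₁) l(ω₂) m(ω₄). -/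
def C124 (β : ℝ) (k l m : ℝ → ℝ) : ℝ → ℝ :=
  Cfull β k l m (fun ω₁ p => (ω₁, p.1 + p.2 - ω₁, p.2))

/-- C¹³⁴[k,l,m](ω₁): integrand k(ω₁) l(ω₃) m(ω₄). -/
def C134 (β : ℝ) (k l m : ℝ → ℝ) : ℝ → ℝ :=
  Cfull β k l m (fun ω₁ p => (ω₁, p.1, p.2))

/-- C¹²³[k,l,m](ω₁): integrand k(ω₁) l(ω₂) m(ω₃). -/
def C123 (β : ℝ) (k l m : ℝ → ℝ) : ℝ → ℝ :=
  Cfull β k l m (fun ω₁ p => (ω₁, p.1 + p.2 - ω₁, p.1))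

lemma jb_pos (ω : ℝ) : 0 < jb ω := Real.sqrt_pos.2 (by positivity)

lemma n01_pos (M ω : ℝ) : 0 < n01 M ω := Real.rpow_pos_of_pos (jb_pos ω) _

lemma n01_continuous (M : ℝ) : Continuous (n01 M) := by
  apply Continuous.rpow_const
  · exact (continuous_const.add (continuous_pow 2)).sqrt
  · intro x; exact Or.inl (jb_pos x).ne'

lemma jb_le {ω b : ℝ} (hb : 0 ≤ b) (h : 1 + ω ^ 2 ≤ b ^ 2) : jb ω ≤ b := by
  rw [jb, show b = Real.sqrt (b ^ 2) by rw [Real.sqrt_sq hb]]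
  exact Real.sqrt_le_sqrt h

lemma n01_ge {M ω b : ℝ} (hM : 0 ≤ M) (hb : 0 ≤ b) (h : 1 + ω ^ 2 ≤ b ^ 2) :
    b ^ (-(M / 2)) ≤ n01 M ω :=
  Real.rpow_le_rpow_of_nonpos (jb_pos ω) (jb_le hb h) (by linarith)

set_option maxHeartbeats 2000000 in
/-- Lower bound: C₂₁²³⁴[n⁰¹,n⁰¹,n⁰¹](ω₁) ≳ ω₁^{2β − 1/2 − M/2} for ω₁ > 1. -/
theorem C21_lower_bound (β M : ℝ) (hβ0 : 0 ≤ β) (hβ1 : β ≤ 1) (hM : 6 < M) :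
    ∃ c : ℝ, 0 < c ∧ ∀ ω₁ : ℝ, 1 < ω₁ →
      c * ω₁ ^ (2 * β - 1/2 - M / 2) ≤ C21op β (n01 M) (n01 M) (n01 M) ω₁ := by
  have hM0 : (0:ℝ) ≤ M := by linarith
  set K₀ : ℝ := (8:ℝ)⁻¹ ^ ((3:ℝ)/2) * (4:ℝ)⁻¹ * (2:ℝ)⁻¹ *
      ((3:ℝ) ^ (-(M/2)) * (3:ℝ) ^ (-(M/2)) * (2:ℝ) ^ (-(M/2))) with hK₀
  have hK₀pos : 0 < K₀ := by
    have h1 : (0:ℝ) < (3:ℝ) ^ (-(M/2)) := Real.rpow_pos_of_pos (by norm_num) _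
    have h2 : (0:ℝ) < (2:ℝ) ^ (-(M/2)) := Real.rpow_pos_of_pos (by norm_num) _
    have h3 : (0:ℝ) < (8:ℝ)⁻¹ ^ ((3:ℝ)/2) := Real.rpow_pos_of_pos (by norm_num) _
    have : (0:ℝ) < (4:ℝ)⁻¹ := by norm_num
    exact mul_pos (mul_pos (mul_pos h3 this) (by norm_num)) (mul_pos (mul_pos h1 h1) h2)
  refine ⟨2 * π ^ 3 * K₀, by positivity, fun ω₁ hω₁ => ?_⟩
  have hpos : (0:ℝ) < ω₁ := by linarith
  set F : ℝ → ℝ → ℝ := fun ω₃ ω₄ =>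
    (ω₃ + ω₄ - ω₁) ^ (β + 1/2) * ω₃ ^ β * ω₄ ^ β *
      (n01 M (ω₃ + ω₄ - ω₁) * n01 M ω₃ * n01 M ω₄) with hF
  set G : ℝ → ℝ := fun ω₃ => ∫ ω₄ in (ω₁ - ω₃)..ω₁, F ω₃ ω₄ with hG
  have hC : C21op β (n01 M) (n01 M) (n01 M) ω₁
      = 64 * π ^ 3 * ω₁ ^ (β - 1/2) * ∫ ω₃ in (0:ℝ)..(ω₁/2), G ω₃ := rfl
  set m : ℝ := K₀ * ω₁ ^ (β - M/2) with hm
  have hmpos : 0 < m := mul_pos hK₀pos (Real.rpow_pos_of_pos hpos _)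
  set a : ℝ := min 1 (ω₁/4) with ha
  have ha4 : (4:ℝ)⁻¹ ≤ a := le_min (by norm_num) (by linarith)
  have ha1 : a ≤ 1 := min_le_left _ _
  have haq : a ≤ ω₁/4 := min_le_right _ _
  have ha0 : 0 < a := lt_of_lt_of_le (by norm_num) ha4
  -- continuity of the integrand
  have hcF : Continuous (Function.uncurry F) := by
    have c1 : Continuous fun p : ℝ × ℝ => (p.1 + p.2 - ω₁) ^ (β + 1/2) :=
      (Real.continuous_rpow_const (by linarith)).comp
        ((continuous_fst.add continuous_snd).sub continuous_const)
    have c2 : Continuous fun p : ℝ × ℝ => p.1 ^ β :=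
      (Real.continuous_rpow_const hβ0).comp continuous_fst
    have c3 : Continuous fun p : ℝ × ℝ => p.2 ^ β :=
      (Real.continuous_rpow_const hβ0).comp continuous_snd
    have c4 : Continuous fun p : ℝ × ℝ => n01 M (p.1 + p.2 - ω₁) :=
      (n01_continuous M).comp ((continuous_fst.add continuous_snd).sub continuous_const)
    have c5 : Continuous fun p : ℝ × ℝ => n01 M p.1 := (n01_continuous M).comp continuous_fst
    have c6 : Continuous fun p : ℝ × ℝ => n01 M p.2 := (n01_continuous M).comp continuous_snd
    exact ((c1.mul c2).mul c3).mul ((c4.mul c5).mul c6)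
  have hcF1 : ∀ ω₃ : ℝ, Continuous (F ω₃) := fun ω₃ =>
    hcF.comp (continuous_const.prodMk continuous_id)
  have hint : ∀ ω₃ u v : ℝ, IntervalIntegrable (F ω₃) volume u v := fun ω₃ u v =>
    (hcF1 ω₃).intervalIntegrable u v
  -- nonnegativity of the integrand on the domain
  have hFnn : ∀ ω₃, 0 ≤ ω₃ → ω₃ ≤ ω₁/2 →
      ∀ ω₄ ∈ Set.Icc (ω₁ - ω₃) ω₁, 0 ≤ F ω₃ ω₄ := by
    intro ω₃ h0 h2 ω₄ h4
    have h41 : ω₁ - ω₃ ≤ ω₄ := h4.1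
    have hw2 : 0 ≤ ω₃ + ω₄ - ω₁ := by linarith
    have hw4 : 0 ≤ ω₄ := by linarith
    have hn : 0 < n01 M (ω₃ + ω₄ - ω₁) * n01 M ω₃ * n01 M ω₄ :=
      mul_pos (mul_pos (n01_pos _ _) (n01_pos _ _)) (n01_pos _ _)
    exact mul_nonneg (mul_nonneg (mul_nonneg (Real.rpow_nonneg hw2 _)
      (Real.rpow_nonneg h0 _)) (Real.rpow_nonneg hw4 _)) hn.le
  -- key pointwise lower bound
  have hkey : ∀ ω₃ ∈ Set.Icc a (2*a), ∀ ω₄ ∈ Set.Icc (ω₁ - ω₃/2) ω₁, m ≤ F ω₃ ω₄ := by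
    intro ω₃ h3 ω₄ h4
    have h3l : (4:ℝ)⁻¹ ≤ ω₃ := le_trans ha4 h3.1
    have h3u : ω₃ ≤ 2 := le_trans h3.2 (by linarith)
    have h3q : ω₃ ≤ ω₁/2 := le_trans h3.2 (by linarith)
    have h4l : ω₁ - ω₃/2 ≤ ω₄ := h4.1
    have h4u : ω₄ ≤ ω₁ := h4.2
    have h4half : ω₁/2 ≤ ω₄ := by linarith
    have hw2l : ω₃/2 ≤ ω₃ + ω₄ - ω₁ := by linarith
    have hw2u : ω₃ + ω₄ - ω₁ ≤ 2 := by linarith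
    have hw2e : (8:ℝ)⁻¹ ≤ ω₃ + ω₄ - ω₁ := by linarith
    have hA : (8:ℝ)⁻¹ ^ ((3:ℝ)/2) ≤ (ω₃ + ω₄ - ω₁) ^ (β + 1/2) := by
      calc (8:ℝ)⁻¹ ^ ((3:ℝ)/2) ≤ (8:ℝ)⁻¹ ^ (β + 1/2) :=
            Real.rpow_le_rpow_of_exponent_ge (by norm_num) (by norm_num) (by linarith)
        _ ≤ (ω₃ + ω₄ - ω₁) ^ (β + 1/2) :=
            Real.rpow_le_rpow (by norm_num) hw2e (by linarith)
    have hB : (4:ℝ)⁻¹ ≤ ω₃ ^ β := by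
      calc (4:ℝ)⁻¹ = (4:ℝ)⁻¹ ^ (1:ℝ) := (Real.rpow_one _).symm
        _ ≤ (4:ℝ)⁻¹ ^ β := Real.rpow_le_rpow_of_exponent_ge (by norm_num) (by norm_num) hβ1
        _ ≤ ω₃ ^ β := Real.rpow_le_rpow (by norm_num) h3l hβ0
    have hC2 : (2:ℝ)⁻¹ * ω₁ ^ β ≤ ω₄ ^ β := by
      have e1 : (ω₁/2) ^ β = (2:ℝ)⁻¹ ^ β * ω₁ ^ β := by
        rw [div_eq_mul_inv, mul_comm, Real.mul_rpow (by norm_num) hpos.le]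
      have e2 : (2:ℝ)⁻¹ ≤ (2:ℝ)⁻¹ ^ β := by
        calc (2:ℝ)⁻¹ = (2:ℝ)⁻¹ ^ (1:ℝ) := (Real.rpow_one _).symm
          _ ≤ (2:ℝ)⁻¹ ^ β := Real.rpow_le_rpow_of_exponent_ge (by norm_num) (by norm_num) hβ1
      calc (2:ℝ)⁻¹ * ω₁ ^ β ≤ (2:ℝ)⁻¹ ^ β * ω₁ ^ β :=
            mul_le_mul_of_nonneg_right e2 (Real.rpow_nonneg hpos.le _)
        _ = (ω₁/2) ^ β := e1.symm
        _ ≤ ω₄ ^ β := Real.rpow_le_rpow (by linarith) h4half hβ0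
    have hD : (3:ℝ) ^ (-(M/2)) ≤ n01 M (ω₃ + ω₄ - ω₁) :=
      n01_ge hM0 (by norm_num) (by nlinarith)
    have hE : (3:ℝ) ^ (-(M/2)) ≤ n01 M ω₃ := n01_ge hM0 (by norm_num) (by nlinarith)
    have hF4 : (2:ℝ) ^ (-(M/2)) * ω₁ ^ (-(M/2)) ≤ n01 M ω₄ := by
      have h := n01_ge (ω := ω₄) (b := 2*ω₁) hM0 (by linarith) (by nlinarith)
      rwa [Real.mul_rpow (by norm_num) hpos.le] at h
    -- combine
    have nn1 : (0:ℝ) ≤ (ω₃ + ω₄ - ω₁) ^ (β + 1/2) := Real.rpow_nonneg (by linarith) _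
    have nn2 : (0:ℝ) ≤ ω₃ ^ β := Real.rpow_nonneg (by linarith) _
    have p3 : (0:ℝ) < (3:ℝ) ^ (-(M/2)) := Real.rpow_pos_of_pos (by norm_num) _
    have p2 : (0:ℝ) < (2:ℝ) ^ (-(M/2)) * ω₁ ^ (-(M/2)) :=
      mul_pos (Real.rpow_pos_of_pos (by norm_num) _) (Real.rpow_pos_of_pos hpos _)
    have p8 : (0:ℝ) < (8:ℝ)⁻¹ ^ ((3:ℝ)/2) := Real.rpow_pos_of_pos (by norm_num) _
    have pω : (0:ℝ) < ω₁ ^ β := Real.rpow_pos_of_pos hpos _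
    have h12 : (8:ℝ)⁻¹ ^ ((3:ℝ)/2) * (4:ℝ)⁻¹ ≤ (ω₃ + ω₄ - ω₁) ^ (β + 1/2) * ω₃ ^ β :=
      mul_le_mul hA hB (by norm_num) nn1
    have h123 : (8:ℝ)⁻¹ ^ ((3:ℝ)/2) * (4:ℝ)⁻¹ * ((2:ℝ)⁻¹ * ω₁ ^ β)
        ≤ (ω₃ + ω₄ - ω₁) ^ (β + 1/2) * ω₃ ^ β * ω₄ ^ β :=
      mul_le_mul h12 hC2 (mul_nonneg (by norm_num) pω.le) (mul_nonneg nn1 nn2)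
    have h45 : (3:ℝ) ^ (-(M/2)) * (3:ℝ) ^ (-(M/2)) ≤ n01 M (ω₃ + ω₄ - ω₁) * n01 M ω₃ :=
      mul_le_mul hD hE p3.le (n01_pos _ _).le
    have h456 : (3:ℝ) ^ (-(M/2)) * (3:ℝ) ^ (-(M/2)) * ((2:ℝ) ^ (-(M/2)) * ω₁ ^ (-(M/2)))
        ≤ n01 M (ω₃ + ω₄ - ω₁) * n01 M ω₃ * n01 M ω₄ :=
      mul_le_mul h45 hF4 p2.le (mul_pos (n01_pos _ _) (n01_pos _ _)).le
    have hfinal := mul_le_mul h123 h456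
      (mul_pos (mul_pos p3 p3) p2).le
      (mul_nonneg (mul_nonneg nn1 nn2) (Real.rpow_nonneg (by linarith) _))
    have hmeq : m = (8:ℝ)⁻¹ ^ ((3:ℝ)/2) * (4:ℝ)⁻¹ * ((2:ℝ)⁻¹ * ω₁ ^ β) *
        ((3:ℝ) ^ (-(M/2)) * (3:ℝ) ^ (-(M/2)) * ((2:ℝ) ^ (-(M/2)) * ω₁ ^ (-(M/2)))) := by
      rw [hm, hK₀, show β - M/2 = β + -(M/2) by ring, Real.rpow_add hpos]
      ring
    rw [hmeq]
    exact hfinal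
  -- lower bound on the inner integral
  have hinner : ∀ ω₃ ∈ Set.Icc a (2*a), m/8 ≤ G ω₃ := by
    intro ω₃ h3
    have h3l : (4:ℝ)⁻¹ ≤ ω₃ := le_trans ha4 h3.1
    have h3u : ω₃ ≤ 2*a := h3.2
    have h3q : ω₃ ≤ ω₁/2 := by
      have := h3.2; linarith [haq]
    have hsplit : G ω₃ = (∫ ω₄ in (ω₁ - ω₃)..(ω₁ - ω₃/2), F ω₃ ω₄)
        + ∫ ω₄ in (ω₁ - ω₃/2)..ω₁, F ω₃ ω₄ :=
      (intervalIntegral.integral_add_adjacent_intervals (hint ω₃ _ _) (hint ω₃ _ _)).symm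
    have hfirst : 0 ≤ ∫ ω₄ in (ω₁ - ω₃)..(ω₁ - ω₃/2), F ω₃ ω₄ := by
      apply intervalIntegral.integral_nonneg (by linarith)
      intro x hx
      exact hFnn ω₃ (by linarith) h3q x ⟨hx.1, by linarith [hx.2]⟩
    have hsecond : (ω₃/2) * m ≤ ∫ ω₄ in (ω₁ - ω₃/2)..ω₁, F ω₃ ω₄ := by
      have hmono := intervalIntegral.integral_mono_on (by linarith : ω₁ - ω₃/2 ≤ ω₁)
        (intervalIntegrable_const (c := m)) (hint ω₃ _ _)
        (fun x hx => hkey ω₃ h3 x hx)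
      rwa [intervalIntegral.integral_const, smul_eq_mul,
        show ω₁ - (ω₁ - ω₃/2) = ω₃/2 by ring] at hmono
    rw [hsplit]
    nlinarith [hmpos.le]
  -- nonnegativity of G on [0, ω₁/2]
  have hGnn : ∀ ω₃ ∈ Set.Icc (0:ℝ) (ω₁/2), 0 ≤ G ω₃ := by
    intro ω₃ h3
    exact intervalIntegral.integral_nonneg (by linarith [h3.1]) (hFnn ω₃ h3.1 h3.2)
  -- continuity of G
  have hGc : Continuous G := by
    have h1 : Continuous fun x => ∫ t in ω₁..(ω₁ - x), F x t :=
      intervalIntegral.continuous_parametric_intervalIntegral_of_continuous hcF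
        (continuous_const.sub continuous_id)
    have h2 : G = fun x => -∫ t in ω₁..(ω₁ - x), F x t := by
      funext x
      rw [hG]
      exact intervalIntegral.integral_symm _ _
    rw [h2]
    exact h1.neg
  have hGint : ∀ u v : ℝ, IntervalIntegrable G volume u v := fun u v =>
    hGc.intervalIntegrable u v
  -- lower bound on the outer integral
  have houter : m/32 ≤ ∫ ω₃ in (0:ℝ)..(ω₁/2), G ω₃ := by
    have e1 : (∫ ω₃ in (0:ℝ)..(ω₁/2), G ω₃)
        = (∫ ω₃ in (0:ℝ)..a, G ω₃) + ((∫ ω₃ in a..(2*a), G ω₃)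
          + ∫ ω₃ in (2*a)..(ω₁/2), G ω₃) := by
      rw [intervalIntegral.integral_add_adjacent_intervals (hGint a (2*a)) (hGint (2*a) (ω₁/2)),
        intervalIntegral.integral_add_adjacent_intervals (hGint 0 a) (hGint a (ω₁/2))]
    have hp1 : 0 ≤ ∫ ω₃ in (0:ℝ)..a, G ω₃ :=
      intervalIntegral.integral_nonneg ha0.le
        (fun x hx => hGnn x ⟨hx.1, by linarith [hx.2, haq]⟩)
    have hp3 : 0 ≤ ∫ ω₃ in (2*a)..(ω₁/2), G ω₃ :=
      intervalIntegral.integral_nonneg (by linarith [haq])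
        (fun x hx => hGnn x ⟨by linarith [hx.1, ha0], hx.2⟩)
    have hp2 : a * (m/8) ≤ ∫ ω₃ in a..(2*a), G ω₃ := by
      have hmono := intervalIntegral.integral_mono_on (by linarith : a ≤ 2*a)
        (intervalIntegrable_const (c := m/8)) (hGint a (2*a)) hinner
      rwa [intervalIntegral.integral_const, smul_eq_mul,
        show 2*a - a = a by ring] at hmono
    have : m/32 ≤ a * (m/8) := by nlinarith [hmpos.le]
    rw [e1]
    linarith
  -- conclude
  rw [hC]
  have hsplit : ω₁ ^ (2 * β - 1/2 - M/2) = ω₁ ^ (β - 1/2) * ω₁ ^ (β - M/2) := by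
    rw [← Real.rpow_add hpos]; congr 1; ring
  have hx : (0:ℝ) ≤ 64 * π ^ 3 * ω₁ ^ (β - 1/2) :=
    mul_nonneg (by positivity) (Real.rpow_nonneg hpos.le _)
  calc 2 * π ^ 3 * K₀ * ω₁ ^ (2 * β - 1/2 - M/2)
      = 64 * π ^ 3 * ω₁ ^ (β - 1/2) * (m/32) := by rw [hsplit, hm]; ring
    _ ≤ 64 * π ^ 3 * ω₁ ^ (β - 1/2) * ∫ ω₃ in (0:ℝ)..(ω₁/2), G ω₃ :=
        mul_le_mul_of_nonneg_left houter hx
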